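/- Let b > 0 and consider the equilateral triangle in ℝ² with vertices A = (0, √3·b), B = (−b, 0), C = (b, 0). Then for every point P ∈ ℝ², W(P) ≥ b², with equality if and only if P = (0, (√3/3)·b), which is the incenter of the triangle. -/

import Mathlib

noncomputable section

/-- The point `(x, y)` of the Euclidean plane `ℝ²`. -/
def pt (x y : ℝ) : EuclideanSpace ℝ (Fin 2) :=
  (WithLp.equiv 2 (Fin 2 → ℝ)).symm ![x, y]

/-- The line through `X` and `Y`, i.e. the affine span of `{X, Y}`, as a set. -/
def lineThrough (X Y : EuclideanSpace ℝ (Fin 2)) : Set (EuclideanSpace ℝ (Fin 2)) :=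
  (affineSpan ℝ {X, Y} : AffineSubspace ℝ (EuclideanSpace ℝ (Fin 2)))

/-- The distance sum function of the triangle `ABC`:
`V(P) = dist(P, line BC) + dist(P, line CA) + dist(P, line AB)`. -/
def vSum (A B C P : EuclideanSpace ℝ (Fin 2)) : ℝ :=
  Metric.infDist P (lineThrough B C) + Metric.infDist P (lineThrough C A) +
    Metric.infDist P (lineThrough A B)

/-- The squared-distance sum function of the triangle `ABC`:
`W(P) = dist(P, line BC)² + dist(P, line CA)² + dist(P, line AB)²`. -/
def wSum (A B C P : EuclideanSpace ℝ (Fin 2)) : ℝ :=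
  Metric.infDist P (lineThrough B C) ^ 2 + Metric.infDist P (lineThrough C A) ^ 2 +
    Metric.infDist P (lineThrough A B) ^ 2

/-! Minimizing the quadratic `t ↦ ‖p -ᵥ X - t • (Y -ᵥ X)‖²` gives the squared distance from `p`
to the line `XY` as `‖p -ᵥ X‖² - ⟪Y -ᵥ X, p -ᵥ X⟫² / ‖Y -ᵥ X‖²`. For the three sides of the
triangle this turns `W` into `b² + 3/2 x² + 3/2 (y - √3 b / 3)²`, which gives the minimum and its
unique minimizer. The minimizer is the centroid of the triangle, hence an interior point, and its
squared distance to each side is `b² / 3`. -/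

open Metric

section LineDistance

variable {V P : Type*} [NormedAddCommGroup V] [InnerProductSpace ℝ V] [MetricSpace P]
  [NormedAddTorsor V P]

theorem dist_lineMap_sq {X Y : P} (hXY : X ≠ Y) (p : P) (t : ℝ) :
    dist p (AffineMap.lineMap X Y t) ^ 2 =
      (‖p -ᵥ X‖ ^ 2 - inner ℝ (Y -ᵥ X) (p -ᵥ X) ^ 2 / ‖Y -ᵥ X‖ ^ 2) +
        ‖Y -ᵥ X‖ ^ 2 * (t - inner ℝ (Y -ᵥ X) (p -ᵥ X) / ‖Y -ᵥ X‖ ^ 2) ^ 2 := by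
  have hd : ‖Y -ᵥ X‖ ≠ 0 := norm_ne_zero_iff.2 (vsub_ne_zero.2 hXY.symm)
  rw [dist_eq_norm_vsub V, AffineMap.lineMap_apply, vsub_vadd_eq_vsub_sub, norm_sub_sq_real,
    norm_smul, real_inner_smul_right, real_inner_comm, Real.norm_eq_abs, mul_pow, sq_abs]
  field_simp
  ring

theorem infDist_affineSpan_pair_sq {X Y : P} (hXY : X ≠ Y) (p : P) :
    infDist p (line[ℝ, X, Y] : Set P) ^ 2 =
      ‖p -ᵥ X‖ ^ 2 - inner ℝ (Y -ᵥ X) (p -ᵥ X) ^ 2 / ‖Y -ᵥ X‖ ^ 2 := by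
  set foot := AffineMap.lineMap X Y (inner ℝ (Y -ᵥ X) (p -ᵥ X) / ‖Y -ᵥ X‖ ^ 2)
  have hfoot : dist p foot ^ 2 =
      ‖p -ᵥ X‖ ^ 2 - inner ℝ (Y -ᵥ X) (p -ᵥ X) ^ 2 / ‖Y -ᵥ X‖ ^ 2 := by
    rw [dist_lineMap_sq hXY, sub_self, zero_pow two_ne_zero, mul_zero, add_zero]
  suffices infDist p (line[ℝ, X, Y] : Set P) = dist p foot by rw [this, hfoot]
  refine le_antisymm (infDist_le_dist_of_mem (AffineMap.lineMap_mem_affineSpan_pair _ _ _)) ?_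
  refine (le_infDist ⟨X, left_mem_affineSpan_pair ℝ X Y⟩).2 fun q hq => ?_
  obtain ⟨t, rfl⟩ := mem_affineSpan_pair_iff_exists_lineMap_eq.1 hq
  refine (pow_le_pow_iff_left₀ dist_nonneg dist_nonneg two_ne_zero).1 ?_
  rw [hfoot, dist_lineMap_sq hXY]
  exact le_add_of_nonneg_right (by positivity)

end LineDistance

theorem AffineIndependent.centroid_mem_interior_convexHull {ι V : Type*} [Fintype ι]
    [NormedAddCommGroup V] [NormedSpace ℝ V] [FiniteDimensional ℝ V] {p : ι → V}
    (hp : AffineIndependent ℝ p) (hcard : Fintype.card ι = Module.finrank ℝ V + 1) :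
    Finset.univ.centroid ℝ p ∈ interior (convexHull ℝ (Set.range p)) :=
  (⟨p, hp, hp.affineSpan_eq_top_iff_card_eq_finrank_add_one.2 hcard⟩ :
    AffineBasis ι ℝ V).centroid_mem_interior_convexHull

@[simp] theorem pt_apply_zero (x y : ℝ) : pt x y 0 = x := rfl
@[simp] theorem pt_apply_one (x y : ℝ) : pt x y 1 = y := rfl

theorem eq_pt_iff {P : EuclideanSpace ℝ (Fin 2)} {x y : ℝ} : P = pt x y ↔ P 0 = x ∧ P 1 = y := by
  refine ⟨by rintro rfl; simp, fun ⟨h0, h1⟩ => ?_⟩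
  ext i
  fin_cases i <;> simpa

theorem infDist_lineThrough_sq {X Y : EuclideanSpace ℝ (Fin 2)} (hXY : X ≠ Y)
    (P : EuclideanSpace ℝ (Fin 2)) :
    infDist P (lineThrough X Y) ^ 2 =
      ((Y 0 - X 0) * (P 1 - X 1) - (Y 1 - X 1) * (P 0 - X 0)) ^ 2 /
        ((Y 0 - X 0) ^ 2 + (Y 1 - X 1) ^ 2) := by
  have hnorm : ∀ v : EuclideanSpace ℝ (Fin 2), ‖v‖ ^ 2 = v 0 ^ 2 + v 1 ^ 2 := by
    simp [EuclideanSpace.real_norm_sq_eq, Fin.sum_univ_two]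
  have hd : (Y 0 - X 0) ^ 2 + (Y 1 - X 1) ^ 2 ≠ 0 := by
    simpa [hnorm] using pow_ne_zero 2 (norm_ne_zero_iff.2 (sub_ne_zero.2 hXY.symm))
  rw [lineThrough, infDist_affineSpan_pair_sq hXY, hnorm, hnorm]
  simp only [vsub_eq_sub, PiLp.inner_apply, PiLp.sub_apply, Fin.sum_univ_two, RCLike.inner_apply,
    conj_trivial]
  field_simp
  ring

theorem centroid_equilateral (b : ℝ) :
    Finset.univ.centroid ℝ ![pt 0 (√3 * b), pt (-b) 0, pt b 0] = pt 0 (√3 / 3 * b) := by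
  rw [Finset.centroid_def, Finset.affineCombination_eq_linear_combination _ _ _
    (Finset.sum_centroidWeights_eq_one_of_nonempty ℝ _ Finset.univ_nonempty), eq_pt_iff]
  simp [Fin.sum_univ_three, Finset.centroidWeights]
  ring

section EquilateralTriangle

variable {b : ℝ} (hb : b ≠ 0) (P : EuclideanSpace ℝ (Fin 2))
include hb

theorem infDist_sq_lineThrough_base :
    infDist P (lineThrough (pt (-b) 0) (pt b 0)) ^ 2 = P 1 ^ 2 := by
  rw [infDist_lineThrough_sq (by simp [eq_pt_iff, neg_ne_self.2 hb])]
  simp only [pt_apply_zero, pt_apply_one]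
  field_simp
  ring

theorem infDist_sq_lineThrough_right :
    infDist P (lineThrough (pt b 0) (pt 0 (√3 * b))) ^ 2 =
      ((√3 * (P 0 - b) + P 1) / 2) ^ 2 := by
  rw [infDist_lineThrough_sq (by simp [eq_pt_iff, hb])]
  simp only [pt_apply_zero, pt_apply_one]
  rw [show (0 - b) ^ 2 + (√3 * b - 0) ^ 2 = 4 * b ^ 2 by
    linear_combination b ^ 2 * Real.sq_sqrt (zero_le_three (α := ℝ))]
  field_simp
  ring

theorem infDist_sq_lineThrough_left :
    infDist P (lineThrough (pt 0 (√3 * b)) (pt (-b) 0)) ^ 2 =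
      ((√3 * P 0 - (P 1 - √3 * b)) / 2) ^ 2 := by
  rw [infDist_lineThrough_sq (by simp [eq_pt_iff, hb])]
  simp only [pt_apply_zero, pt_apply_one]
  rw [show (-b - 0) ^ 2 + (0 - √3 * b) ^ 2 = 4 * b ^ 2 by
    linear_combination b ^ 2 * Real.sq_sqrt (zero_le_three (α := ℝ))]
  field_simp
  ring

theorem wSum_equilateral :
    wSum (pt 0 (√3 * b)) (pt (-b) 0) (pt b 0) P =
      b ^ 2 + 3 / 2 * P 0 ^ 2 + 3 / 2 * (P 1 - √3 / 3 * b) ^ 2 := by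
  rw [wSum, infDist_sq_lineThrough_base hb, infDist_sq_lineThrough_right hb,
    infDist_sq_lineThrough_left hb]
  linear_combination (P 0 ^ 2 / 2 + b ^ 2 / 3) * Real.sq_sqrt (zero_le_three (α := ℝ))

theorem affineIndependent_equilateral :
    AffineIndependent ℝ ![pt 0 (√3 * b), pt (-b) 0, pt b 0] := by
  rw [affineIndependent_iff_not_collinear_set]
  intro hcol
  have hA : pt 0 (√3 * b) ∈ lineThrough (pt (-b) 0) (pt b 0) :=
    hcol.mem_affineSpan_of_mem_of_ne (by simp) (by simp) (by simp)
      (by simp [eq_pt_iff, neg_ne_self.2 hb])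
  have h := infDist_sq_lineThrough_base hb (pt 0 (√3 * b))
  rw [infDist_zero_of_mem hA, pt_apply_one, zero_pow two_ne_zero, eq_comm,
    pow_eq_zero_iff two_ne_zero] at h
  exact mul_ne_zero (Real.sqrt_ne_zero'.2 three_pos) hb h

theorem incenter_mem_interior_convexHull_equilateral :
    pt 0 (√3 / 3 * b) ∈
      interior (convexHull ℝ
        ({pt 0 (√3 * b), pt (-b) 0, pt b 0} : Set (EuclideanSpace ℝ (Fin 2)))) := by
  have h := (affineIndependent_equilateral hb).centroid_mem_interior_convexHull (by simp)
  rwa [centroid_equilateral, Matrix.range_cons, Matrix.range_cons_cons_empty,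
    Set.singleton_union] at h

end EquilateralTriangle

/-- The equilateral case of Conclusion 2: for the equilateral triangle with vertices
`(0, √3·b)`, `(−b,0)`, `(b,0)` the minimal sum of squared distances from the sides is `b²`,
attained exactly at `(0, (√3/3)·b)`, which is the incenter of the triangle (the interior
point equidistant from the three side lines). -/
theorem stmt_18 (b : ℝ) (hb : 0 < b) :
    (∀ P : EuclideanSpace ℝ (Fin 2),
        b ^ 2 ≤ wSum (pt 0 (Real.sqrt 3 * b)) (pt (-b) 0) (pt b 0) P) ∧
    (∀ P : EuclideanSpace ℝ (Fin 2),
        wSum (pt 0 (Real.sqrt 3 * b)) (pt (-b) 0) (pt b 0) P = b ^ 2 ↔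
          P = pt 0 (Real.sqrt 3 / 3 * b)) ∧
    pt 0 (Real.sqrt 3 / 3 * b) ∈
      interior (convexHull ℝ
        ({pt 0 (Real.sqrt 3 * b), pt (-b) 0, pt b 0} : Set (EuclideanSpace ℝ (Fin 2)))) ∧
    Metric.infDist (pt 0 (Real.sqrt 3 / 3 * b)) (lineThrough (pt (-b) 0) (pt b 0))
        = Metric.infDist (pt 0 (Real.sqrt 3 / 3 * b))
            (lineThrough (pt b 0) (pt 0 (Real.sqrt 3 * b))) ∧
    Metric.infDist (pt 0 (Real.sqrt 3 / 3 * b))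
        (lineThrough (pt b 0) (pt 0 (Real.sqrt 3 * b)))
      = Metric.infDist (pt 0 (Real.sqrt 3 / 3 * b))
          (lineThrough (pt 0 (Real.sqrt 3 * b)) (pt (-b) 0)) := by
  have hb0 := hb.ne'
  have hW := wSum_equilateral hb0
  refine ⟨fun P => ?_, fun P => ?_, incenter_mem_interior_convexHull_equilateral hb0, ?_, ?_⟩
  · rw [hW]
    linarith [sq_nonneg (P 0), sq_nonneg (P 1 - √3 / 3 * b)]
  · rw [hW, eq_pt_iff, ← sub_eq_zero (a := P 1)]
    constructor
    · intro h
      constructor <;> nlinarith [sq_nonneg (P 0), sq_nonneg (P 1 - √3 / 3 * b)]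
    · rintro ⟨h0, h1⟩
      rw [h0, h1]
      ring
  · rw [← pow_left_inj₀ infDist_nonneg infDist_nonneg two_ne_zero,
      infDist_sq_lineThrough_base hb0, infDist_sq_lineThrough_right hb0]
    simp only [pt_apply_zero, pt_apply_one]
    ring
  · rw [← pow_left_inj₀ infDist_nonneg infDist_nonneg two_ne_zero,
      infDist_sq_lineThrough_right hb0, infDist_sq_lineThrough_left hb0]
    simp only [pt_apply_zero, pt_apply_one]
    ring
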